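/- For every real x and every local point xⁱ, the function h admits the convex second-order upper bound h(x) ≤ h(xⁱ) + h′(xⁱ)·(x − xⁱ) + (ε/2)·(x − xⁱ)², where h′(xⁱ) = Σ_{a=1}^{L−1} Σ_{b=a+1}^{L} (−(4π·P_t·|Y_{ab}|·ϑ_{ab})/λ)·sin((2π/λ)·xⁱ·ϑ_{ab} + arg Y_{ab}) and ε = Σ_{a=1}^{L−1} Σ_{b=a+1}^{L} (8π²·P_t·|Y_{ab}|·ϑ_{ab}²)/λ². -/

import Mathlib

open Real Complex Finset

/-! Since `u ↦ u ^ 2 / 2 - cos u` is convex (its second derivative is `1 + cos u ≥ 0`), it lies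
above its tangent lines, i.e. `cos t ≤ cos s - sin s * (t - s) + (t - s) ^ 2 / 2`. Each summand of
`h` is such a cosine, composed with an affine map of slope `ω = 2π ϑ_{ab} / λ` and scaled by the
amplitude `2 P_t |Y_{ab}| ≥ 0`; summing these bounds gives the claim, with `ε` the sum of the
curvatures `2 P_t |Y_{ab}| ω²`. -/

theorem ConvexOn.add_mul_sub_le_of_hasDerivAt {S : Set ℝ} {f : ℝ → ℝ} {f' x y : ℝ}
    (hfc : ConvexOn ℝ S f) (hx : x ∈ S) (hy : y ∈ S) (hf : HasDerivAt f f' x) :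
    f x + f' * (y - x) ≤ f y := by
  rcases lt_trichotomy x y with hxy | rfl | hyx
  · have := hfc.le_slope_of_hasDerivAt hx hy hxy hf
    rw [slope_def_field, le_div_iff₀ (sub_pos.2 hxy)] at this
    linarith
  · simp
  · have := hfc.slope_le_of_hasDerivAt hy hx hyx hf
    rw [slope_def_field, div_le_iff₀ (sub_pos.2 hyx)] at this
    linarith

namespace Real

theorem hasDerivAt_sq_div_two_sub_cos (u : ℝ) :
    HasDerivAt (fun u => u ^ 2 / 2 - cos u) (u + sin u) u := by
  simpa using ((hasDerivAt_pow 2 u).div_const 2).fun_sub (hasDerivAt_cos u)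

theorem convexOn_sq_div_two_sub_cos : ConvexOn ℝ Set.univ fun u => u ^ 2 / 2 - cos u :=
  convexOn_of_hasDerivWithinAt2_nonneg convex_univ (by fun_prop)
    (fun u _ => (hasDerivAt_sq_div_two_sub_cos u).hasDerivWithinAt)
    (fun u _ => ((hasDerivAt_id u).fun_add (hasDerivAt_sin u)).hasDerivWithinAt)
    fun u _ => by linarith [neg_one_le_cos u]

theorem cos_le_cos_sub_sin_mul_add_sq (s t : ℝ) :
    cos t ≤ cos s - sin s * (t - s) + (t - s) ^ 2 / 2 := by
  have := convexOn_sq_div_two_sub_cos.add_mul_sub_le_of_hasDerivAt (Set.mem_univ s)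
    (Set.mem_univ t) (hasDerivAt_sq_div_two_sub_cos s)
  linarith

theorem mul_cos_mul_add_le (A ω φ x y : ℝ) (hA : 0 ≤ A) :
    A * cos (ω * x + φ) ≤ A * cos (ω * y + φ) - A * ω * sin (ω * y + φ) * (x - y)
      + A * ω ^ 2 / 2 * (x - y) ^ 2 := by
  have := mul_le_mul_of_nonneg_left (cos_le_cos_sub_sin_mul_add_sq (ω * y + φ) (ω * x + φ)) hA
  linarith

end Real

theorem h_second_order_upper_bound_general
    (L : ℕ) (lam Pt : ℝ) (hPt : 0 < Pt)
    (ϑ : Fin L → ℝ) (Y : Fin L → Fin L → ℂ) (X : ℝ)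
    (h h' : ℝ → ℝ)
    (hh : ∀ x, h x = Pt * X + ∑ a : Fin L, ∑ b ∈ Finset.univ.filter (fun b => a < b),
      2 * Pt * ‖Y a b‖ *
        Real.cos (2 * π / lam * x * (ϑ b - ϑ a) + Complex.arg (Y a b)))
    (hh' : ∀ x, h' x = ∑ a : Fin L, ∑ b ∈ Finset.univ.filter (fun b => a < b),
      -(4 * π * Pt * ‖Y a b‖ * (ϑ b - ϑ a)) / lam *
        Real.sin (2 * π / lam * x * (ϑ b - ϑ a) + Complex.arg (Y a b)))
    (ε : ℝ)
    (hε : ε = ∑ a : Fin L, ∑ b ∈ Finset.univ.filter (fun b => a < b),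
      8 * π ^ 2 * Pt * ‖Y a b‖ * (ϑ b - ϑ a) ^ 2 / lam ^ 2)
    (x xi : ℝ) :
    h x ≤ h xi + h' xi * (x - xi) + ε / 2 * (x - xi) ^ 2 := by
  rw [hh x, hh xi, hh' xi, hε]
  calc _ ≤ Pt * X + ∑ a : Fin L, ∑ b ∈ univ.filter (fun b => a < b),
        (2 * Pt * ‖Y a b‖ * Real.cos (2 * π / lam * xi * (ϑ b - ϑ a) + arg (Y a b))
        + -(4 * π * Pt * ‖Y a b‖ * (ϑ b - ϑ a)) / lam *
            Real.sin (2 * π / lam * xi * (ϑ b - ϑ a) + arg (Y a b)) * (x - xi)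
        + 8 * π ^ 2 * Pt * ‖Y a b‖ * (ϑ b - ϑ a) ^ 2 / lam ^ 2 / 2 * (x - xi) ^ 2) := by
        gcongr with a _ b _
        have := Real.mul_cos_mul_add_le (2 * Pt * ‖Y a b‖) (2 * π / lam * (ϑ b - ϑ a))
          (arg (Y a b)) x xi (by positivity)
        simp only [mul_right_comm _ (ϑ b - ϑ a)] at this
        exact this.trans_eq (by ring)
    _ = _ := by simp only [sum_add_distrib, sum_mul, sum_div]; ring

/-- Convex second-order upper bound of `h` around the local point `xⁱ`:
`h(x) ≤ h(xⁱ) + h'(xⁱ)·(x − xⁱ) + (ε/2)·(x − xⁱ)²`. -/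
theorem h_second_order_upper_bound
    (L : ℕ) (hL : 1 ≤ L) (lam Pt : ℝ) (hlam : 0 < lam) (hPt : 0 < Pt)
    (ϑ : Fin L → ℝ) (Y : Fin L → Fin L → ℂ) (X : ℝ)
    (h h' : ℝ → ℝ)
    (hh : ∀ x, h x = Pt * X + ∑ a : Fin L, ∑ b ∈ Finset.univ.filter (fun b => a < b),
      2 * Pt * ‖Y a b‖ *
        Real.cos (2 * π / lam * x * (ϑ b - ϑ a) + Complex.arg (Y a b)))
    (hh' : ∀ x, h' x = ∑ a : Fin L, ∑ b ∈ Finset.univ.filter (fun b => a < b),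
      -(4 * π * Pt * ‖Y a b‖ * (ϑ b - ϑ a)) / lam *
        Real.sin (2 * π / lam * x * (ϑ b - ϑ a) + Complex.arg (Y a b)))
    (ε : ℝ)
    (hε : ε = ∑ a : Fin L, ∑ b ∈ Finset.univ.filter (fun b => a < b),
      8 * π ^ 2 * Pt * ‖Y a b‖ * (ϑ b - ϑ a) ^ 2 / lam ^ 2)
    (x xi : ℝ) :
    h x ≤ h xi + h' xi * (x - xi) + ε / 2 * (x - xi) ^ 2 :=
  h_second_order_upper_bound_general L lam Pt hPt ϑ Y X h h' hh hh' ε hε x xi
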